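/- If p ∈ 𝒫_n and deg p > n, then the last n coefficients of p, namely a_{m-n+1}, ..., a_{m-1}, a_m where m = deg p, are all nonnegative. -/

import Mathlib

/-!
Let `S` be the cyclic shift matrix on `Fin n`, so that `(t • S) ^ j` has entry `(0, r)` equal to
`t ^ j` when `j ≡ r [MOD n]` and `0` otherwise. Hence entry `(0, r)` of `p(t • S)` is the
`r mod n`-part of `p` evaluated at `t`, and `p ∈ 𝒫_n` makes every residue part nonnegative on
`[0, ∞)`, so its leading coefficient is nonnegative. For `m - n < J ≤ m` no exponent `≤ m` above
`J` is congruent to `J` mod `n`, so the residue part of `J` has degree at most `J` and its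
coefficient of `X ^ J` is `a_J`.
-/

open Polynomial Matrix

/-- `Pn n p` means the real polynomial `p` preserves entrywise nonnegativity of all
`n`-by-`n` nonnegative real matrices. -/
def Pn (n : ℕ) (p : Polynomial ℝ) : Prop :=
  ∀ A : Matrix (Fin n) (Fin n) ℝ, (∀ i j, 0 ≤ A i j) →
    ∀ i j, 0 ≤ ((Polynomial.aeval A) p) i j

/-- The `r mod n`-part of a real polynomial. -/
noncomputable def rpart (p : Polynomial ℝ) (n r : ℕ) : Polynomial ℝ :=
  ∑ j ∈ Finset.range (p.natDegree + 1),
    if j % n = r then Polynomial.C (p.coeff j) * Polynomial.X ^ j else 0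

open Fin.NatCast

theorem coeff_rpart (p : ℝ[X]) (n r i : ℕ) :
    (rpart p n r).coeff i = if i % n = r then p.coeff i else 0 := by
  simp only [rpart, finsetSum_coeff, apply_ite (coeff · i), coeff_C_mul_X_pow, coeff_zero,
    ← ite_and, and_comm (a := _ % n = r)]
  simp only [ite_and, Finset.sum_ite_eq, Finset.mem_range]
  rcases lt_or_ge p.natDegree i with hi | hi
  · simp [coeff_eq_zero_of_natDegree_lt hi]
  · simp [Nat.lt_succ_of_le hi]

theorem eval_rpart (p : ℝ[X]) (n r : ℕ) (t : ℝ) :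
    (rpart p n r).eval t =
      ∑ j ∈ Finset.range (p.natDegree + 1), if j % n = r then p.coeff j * t ^ j else 0 := by
  simp [rpart, eval_finsetSum, apply_ite (eval t)]

theorem natDegree_rpart_le {p : ℝ[X]} {n J : ℕ} (hJ : p.natDegree < J + n) :
    (rpart p n (J % n)).natDegree ≤ J := by
  refine natDegree_le_iff_coeff_eq_zero.mpr fun N hN => ?_
  rw [coeff_rpart]
  split_ifs with h
  · refine p.coeff_eq_zero_of_natDegree_lt ?_
    have hdvd : n ∣ N - J := (Nat.modEq_iff_dvd' hN.le).mp h.symm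
    have := Nat.le_of_dvd (by omega) hdvd
    omega
  · rfl

theorem Polynomial.leadingCoeff_nonneg_of_eval_nonneg {𝕜 : Type*} [NormedField 𝕜] [LinearOrder 𝕜]
    [IsStrictOrderedRing 𝕜] [OrderTopology 𝕜] {q : 𝕜[X]} (h : ∀ t, 0 ≤ t → 0 ≤ q.eval t) :
    0 ≤ q.leadingCoeff := by
  by_contra! hlc
  rcases le_or_gt q.degree 0 with hdeg | hdeg
  · have hq : q.natDegree = 0 := natDegree_eq_zero_iff_degree_le_zero.mpr hdeg
    rw [leadingCoeff, hq, coeff_zero_eq_eval_zero] at hlc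
    exact (h 0 le_rfl).not_gt hlc
  · obtain ⟨t, ht, ht0⟩ := ((q.tendsto_atBot_of_leadingCoeff_nonpos hdeg hlc.le).eventually
      (Filter.eventually_lt_atBot 0)).and (Filter.eventually_ge_atTop 0) |>.exists
    exact (h t ht0).not_gt ht

theorem Polynomial.coeff_nonneg_of_eval_nonneg {𝕜 : Type*} [NormedField 𝕜] [LinearOrder 𝕜]
    [IsStrictOrderedRing 𝕜] [OrderTopology 𝕜] {q : 𝕜[X]} {J : ℕ} (hq : q.natDegree ≤ J)
    (h : ∀ t, 0 ≤ t → 0 ≤ q.eval t) : 0 ≤ q.coeff J := by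
  rcases hq.eq_or_lt with rfl | hlt
  · exact leadingCoeff_nonneg_of_eval_nonneg h
  · rw [coeff_eq_zero_of_natDegree_lt hlt]

section CyclicShift

variable (R : Type*) (n : ℕ) [NeZero n]

def cyclicShift [Zero R] [One R] : Matrix (Fin n) (Fin n) R :=
  Matrix.of fun i c => if c = i + 1 then 1 else 0

variable {R n}

theorem cyclicShift_pow_apply [Semiring R] (j : ℕ) (i c : Fin n) :
    (cyclicShift R n ^ j) i c = if c = i + j then 1 else 0 := by
  induction j generalizing c with
  | zero => simp [one_apply, eq_comm]
  | succ j ih =>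
    rw [pow_succ, mul_apply]
    simp only [ih, ite_mul, one_mul, zero_mul, Finset.sum_ite_eq', Finset.mem_univ, if_true]
    simp only [cyclicShift, of_apply, Nat.cast_succ, add_assoc]

theorem aeval_smul_cyclicShift_zero_apply (p : ℝ[X]) (t : ℝ) (r : Fin n) :
    aeval (t • cyclicShift ℝ n) p 0 r = (rpart p n r).eval t := by
  have hcast (j : ℕ) : r = (j : Fin n) ↔ j % n = r := by
    rw [Fin.ext_iff, Fin.val_natCast, eq_comm]
  simp [aeval_eq_sum_range, Matrix.sum_apply, _root_.smul_pow, cyclicShift_pow_apply, eval_rpart,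
    hcast, mul_comm]

end CyclicShift

theorem Pn.eval_rpart_nonneg {n : ℕ} [NeZero n] {p : ℝ[X]} (hp : Pn n p) (r : Fin n) {t : ℝ}
    (ht : 0 ≤ t) : 0 ≤ (rpart p n r).eval t := by
  rw [← aeval_smul_cyclicShift_zero_apply]
  refine hp _ (fun i c => ?_) 0 r
  simp only [Matrix.smul_apply, cyclicShift, of_apply, smul_eq_mul]
  split_ifs <;> simp [ht]

theorem stmt_10 (n : ℕ) (p : Polynomial ℝ) (hp : Pn n p) (hd : n < p.natDegree) :
    ∀ k, 1 ≤ k → k ≤ n → 0 ≤ p.coeff (p.natDegree - n + k) := by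
  intro k hk1 hkn
  have : NeZero n := ⟨by omega⟩
  set J := p.natDegree - n + k
  have hpart : p.coeff J = (rpart p n (J % n)).coeff J := by simp [coeff_rpart]
  rw [hpart]
  refine coeff_nonneg_of_eval_nonneg (natDegree_rpart_le (by omega)) fun t ht => ?_
  simpa only [Fin.val_natCast] using hp.eval_rpart_nonneg (J : Fin n) ht
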